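/- arXiv:2604.07710 — 6 statements merged into one kernel-verified Lean document; each statement's English description precedes it below -/
import Mathlib

section
/- Let γ ≥ 2 be a real number. Then for all real numbers n ≥ 0 and ρ ≥ 0, |n − ρ|^γ ≤ p(n|ρ). -/
/-!
Fix `ρ` and compare `x ↦ p(x|ρ)` with `x ↦ |x − ρ|^γ`: both vanish at `x = ρ`, and their
derivatives are `γ (x^{γ−1} − ρ^{γ−1})` and `± γ |x − ρ|^{γ−1}`. Since `γ − 1 ≥ 1`, the map
`t ↦ t^{γ−1}` is superadditive on `[0, ∞)`, which says exactly that the first derivative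
dominates the second to the right of `ρ` and is dominated by it to the left.
-/

/-- The relative pressure functional `p(n|ρ) = n^γ − ρ^γ − γ ρ^{γ−1}(n − ρ)`. -/
noncomputable def relPressure (γ n ρ : ℝ) : ℝ :=
  n ^ γ - ρ ^ γ - γ * ρ ^ (γ - 1) * (n - ρ)

open Set

variable {γ ρ : ℝ}

lemma relPressure_self (γ ρ : ℝ) : relPressure γ ρ ρ = 0 := by
  simp [relPressure]

lemma hasDerivAt_relPressure (hγ : 1 ≤ γ) (x : ℝ) :
    HasDerivAt (fun n ↦ relPressure γ n ρ) (γ * x ^ (γ - 1) - γ * ρ ^ (γ - 1)) x := by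
  have h := ((Real.hasDerivAt_rpow_const (x := x) (Or.inr hγ)).sub_const (ρ ^ γ)).sub
    (((hasDerivAt_id x).sub_const ρ).const_mul (γ * ρ ^ (γ - 1)))
  exact h.congr_deriv (by ring)

lemma rpow_sub_le_relPressure_of_le (hγ : 2 ≤ γ) (hρ : 0 ≤ ρ) {n : ℝ} (hn : ρ ≤ n) :
    (n - ρ) ^ γ ≤ relPressure γ n ρ := by
  set F : ℝ → ℝ := fun x ↦ relPressure γ x ρ - (x - ρ) ^ γ
  have hF : ∀ x, HasDerivAt F
      (γ * x ^ (γ - 1) - γ * ρ ^ (γ - 1) - 1 * γ * (x - ρ) ^ (γ - 1)) x := fun x ↦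
    (hasDerivAt_relPressure (by linarith) x).sub
      (((hasDerivAt_id x).sub_const ρ).rpow_const (Or.inr (by linarith)))
  have hmono : MonotoneOn F (Ici ρ) := by
    refine monotoneOn_of_hasDerivWithinAt_nonneg (convex_Ici ρ)
      (fun x _ ↦ (hF x).continuousAt.continuousWithinAt)
      (fun x _ ↦ (hF x).hasDerivWithinAt) fun x hx ↦ ?_
    rw [interior_Ici, mem_Ioi] at hx
    have hsuper := Real.add_rpow_le_rpow_add hρ (sub_nonneg.2 hx.le) (by linarith : 1 ≤ γ - 1)
    rw [add_sub_cancel] at hsuper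
    nlinarith
  have h := hmono self_mem_Ici hn hn
  simp only [F, relPressure_self, sub_self, Real.zero_rpow (by linarith : γ ≠ 0)] at h
  linarith

lemma rpow_sub_le_relPressure_of_ge {n : ℝ} (hγ : 2 ≤ γ) (hn : 0 ≤ n) (hnρ : n ≤ ρ) :
    (ρ - n) ^ γ ≤ relPressure γ n ρ := by
  set G : ℝ → ℝ := fun x ↦ relPressure γ x ρ - (ρ - x) ^ γ
  have hG : ∀ x, HasDerivAt G
      (γ * x ^ (γ - 1) - γ * ρ ^ (γ - 1) - (-1) * γ * (ρ - x) ^ (γ - 1)) x := fun x ↦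
    (hasDerivAt_relPressure (by linarith) x).sub
      (((hasDerivAt_id x).const_sub ρ).rpow_const (Or.inr (by linarith)))
  have hanti : AntitoneOn G (Icc 0 ρ) := by
    refine antitoneOn_of_hasDerivWithinAt_nonpos (convex_Icc 0 ρ)
      (fun x _ ↦ (hG x).continuousAt.continuousWithinAt)
      (fun x _ ↦ (hG x).hasDerivWithinAt) fun x hx ↦ ?_
    rw [interior_Icc, mem_Ioo] at hx
    have hsuper := Real.add_rpow_le_rpow_add hx.1.le (sub_nonneg.2 hx.2.le)
      (by linarith : 1 ≤ γ - 1)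
    rw [add_sub_cancel] at hsuper
    nlinarith
  have h := hanti ⟨hn, hnρ⟩ ⟨hn.trans hnρ, le_rfl⟩ hnρ
  simp only [G, relPressure_self, sub_self, Real.zero_rpow (by linarith : γ ≠ 0)] at h
  linarith

theorem abs_pow_le_relPressure (γ : ℝ) (hγ : 2 ≤ γ) :
    ∀ n ρ : ℝ, 0 ≤ n → 0 ≤ ρ → |n - ρ| ^ γ ≤ relPressure γ n ρ := by
  intro n ρ hn hρ
  rcases le_total ρ n with hρn | hnρ
  · rw [abs_of_nonneg (sub_nonneg.2 hρn)]
    exact rpow_sub_le_relPressure_of_le hγ hρ hρn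
  · rw [abs_sub_comm, abs_of_nonneg (sub_nonneg.2 hnρ)]
    exact rpow_sub_le_relPressure_of_ge hγ hn hnρ
end

section
/- Let γ > 1 be a real number. Then for all real numbers n > 0 and ρ > 0, p(n|ρ) ≥ (γ(γ−1)/2) · min{n^{γ−2}, ρ^{γ−2}} · (n − ρ)². -/
/-! With `c = γ(γ−1)/2 · min(n^{γ−2}, ρ^{γ−2})`, the function `t ↦ t^γ − c t²` has
second derivative `γ(γ−1) t^{γ−2} − 2c ≥ 0` between `n` and `ρ`, because `t ↦ t^{γ−2}` is monotone
there. So it lies above its tangent line at `ρ`, and evaluating at `n` gives `p(n|ρ) ≥ c (n − ρ)²`. -/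

open Set

theorem ConvexOn.add_mul_sub_le_of_hasDerivAt {S : Set ℝ} {f : ℝ → ℝ} {f' x y : ℝ}
    (hf : ConvexOn ℝ S f) (hx : x ∈ S) (hy : y ∈ S) (hder : HasDerivAt f f' x) :
    f x + f' * (y - x) ≤ f y := by
  rcases lt_trichotomy x y with hxy | rfl | hyx
  · have hslope := hf.le_slope_of_hasDerivAt hx hy hxy hder
    rw [slope_def_field, le_div_iff₀ (sub_pos.2 hxy)] at hslope
    linarith
  · simp
  · have hslope := hf.slope_le_of_hasDerivAt hy hx hyx hder
    rw [slope_def_field, div_le_iff₀ (sub_pos.2 hyx)] at hslope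
    linarith

theorem min_rpow_le_rpow_of_mem_uIcc {a b t : ℝ} (p : ℝ) (ha : 0 < a) (hb : 0 < b)
    (ht : t ∈ uIcc a b) : min (a ^ p) (b ^ p) ≤ t ^ p := by
  wlog hab : a ≤ b generalizing a b
  · rw [min_comm]
    exact this hb ha (uIcc_comm a b ▸ ht) (le_of_not_ge hab)
  rw [uIcc_of_le hab] at ht
  rcases le_total 0 p with hp | hp
  · exact min_le_of_left_le (Real.rpow_le_rpow ha.le ht.1 hp)
  · exact min_le_of_right_le (Real.rpow_le_rpow_of_nonpos (ha.trans_le ht.1) ht.2 hp)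

theorem hasDerivAt_rpow_sub_mul_sq {γ c t : ℝ} (ht : t ≠ 0) :
    HasDerivAt (fun t => t ^ γ - c * t ^ 2) (γ * t ^ (γ - 1) - c * (2 * t)) t := by
  refine ((Real.hasDerivAt_rpow_const (Or.inl ht)).sub
    ((hasDerivAt_pow 2 t).const_mul c)).congr_deriv ?_
  norm_num

theorem convexOn_rpow_sub_mul_sq {S : Set ℝ} {γ c : ℝ} (hS : Convex ℝ S) (hSpos : S ⊆ Ioi 0)
    (hc : ∀ t ∈ S, 2 * c ≤ γ * (γ - 1) * t ^ (γ - 2)) :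
    ConvexOn ℝ S (fun t => t ^ γ - c * t ^ 2) := by
  have hne : ∀ t ∈ S, t ≠ 0 := fun t ht => (hSpos ht).ne'
  refine convexOn_of_hasDerivWithinAt2_nonneg hS
    (f' := fun t => γ * t ^ (γ - 1) - c * (2 * t))
    (f'' := fun t => γ * (γ - 1) * t ^ (γ - 2) - 2 * c) ?_ ?_ ?_ ?_
  · exact fun t ht => (hasDerivAt_rpow_sub_mul_sq (hne t ht)).continuousAt.continuousWithinAt
  · exact fun t ht => (hasDerivAt_rpow_sub_mul_sq (hne t (interior_subset ht))).hasDerivWithinAt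
  · intro t ht
    refine ((((Real.hasDerivAt_rpow_const (p := γ - 1)
      (Or.inl (hne t (interior_subset ht)))).const_mul γ).sub
      (((hasDerivAt_id t).const_mul 2).const_mul c)).congr_deriv ?_).hasDerivWithinAt
    rw [sub_sub, one_add_one_eq_two]
    ring
  · intro t ht
    linarith [hc t (interior_subset ht)]

theorem relPressure_ge_min_pow (γ : ℝ) (hγ : 1 < γ) :
    ∀ n ρ : ℝ, 0 < n → 0 < ρ →
      γ * (γ - 1) / 2 * min (n ^ (γ - 2)) (ρ ^ (γ - 2)) * (n - ρ) ^ 2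
        ≤ relPressure γ n ρ := by
  intro n ρ hn hρ
  set m := min (n ^ (γ - 2)) (ρ ^ (γ - 2))
  have hpos : uIcc n ρ ⊆ Ioi 0 := fun t ht => lt_of_lt_of_le (lt_min hn hρ) ht.1
  have hcurv : ∀ t ∈ uIcc n ρ, 2 * (γ * (γ - 1) / 2 * m) ≤ γ * (γ - 1) * t ^ (γ - 2) :=
    fun t ht => by
      have := mul_le_mul_of_nonneg_left (min_rpow_le_rpow_of_mem_uIcc (γ - 2) hn hρ ht)
        (mul_nonneg (by linarith : (0 : ℝ) ≤ γ) (by linarith : (0 : ℝ) ≤ γ - 1))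
      linarith
  have htangent :=
    (convexOn_rpow_sub_mul_sq (convex_uIcc n ρ) hpos hcurv).add_mul_sub_le_of_hasDerivAt
      right_mem_uIcc left_mem_uIcc (hasDerivAt_rpow_sub_mul_sq hρ.ne')
  simp only [relPressure] at htangent ⊢
  linarith
end

section
/- Let γ > 1 and let 0 < ρ̲ < ρ̄ be real numbers. Then there exists a constant C > 0, depending only on γ, ρ̲, ρ̄, such that for every ρ ∈ [ρ̲, ρ̄] and every n ≥ 0 the following holds: if ρ/2 ≤ n ≤ 2ρ then p(n|ρ) ≥ C (n − ρ)², and if n < ρ/2 or n > 2ρ then p(n|ρ) ≥ C (1 + n^γ). -/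
/-- Scaled Bernoulli inequality: tangent line bound for `x ↦ x ^ γ` at `a`. -/
lemma relPressure_aux_bern (γ : ℝ) (hγ : 1 < γ) {a x : ℝ} (ha : 0 < a) (hx : 0 ≤ x) :
    a ^ γ + γ * a ^ (γ - 1) * (x - a) ≤ x ^ γ := by
  have hs : -1 ≤ x / a - 1 := by
    have : 0 ≤ x / a := div_nonneg hx ha.le
    linarith
  have h := one_add_mul_self_le_rpow_one_add hs hγ.le
  have hxa : (1 : ℝ) + (x / a - 1) = x / a := by ring
  rw [hxa, Real.div_rpow hx ha.le] at h
  have hag : 0 < a ^ γ := Real.rpow_pos_of_pos ha _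
  rw [le_div_iff₀ hag] at h
  have h1 : a ^ (γ - 1) = a ^ γ / a := Real.rpow_sub_one ha.ne' γ
  have key : a ^ γ + γ * a ^ (γ - 1) * (x - a) = (1 + γ * (x / a - 1)) * a ^ γ := by
    rw [h1]; field_simp
  linarith [key ▸ h]

/-- Tangent line inequality for a convex function. -/
lemma relPressure_aux_tangent {S : Set ℝ} {f : ℝ → ℝ} {d x y : ℝ}
    (hfc : ConvexOn ℝ S f) (hx : x ∈ S) (hy : y ∈ S) (hd : HasDerivAt f d x) :
    f x + d * (y - x) ≤ f y := by
  rcases lt_trichotomy x y with h | h | h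
  · have h1 := hfc.le_slope_of_hasDerivAt hx hy h hd
    rw [slope_def_field] at h1
    have h2 := (le_div_iff₀ (by linarith : (0:ℝ) < y - x)).mp h1
    linarith
  · subst h; simp
  · have h1 := hfc.slope_le_of_hasDerivAt hy hx h hd
    rw [slope_def_field] at h1
    have h2 := (div_le_iff₀ (by linarith : (0:ℝ) < x - y)).mp h1
    nlinarith

set_option maxHeartbeats 1600000 in
theorem relPressure_lower_bounds (γ ρlow ρhigh : ℝ) (hγ : 1 < γ)
    (hlow : 0 < ρlow) (hlh : ρlow < ρhigh) :
    ∃ C : ℝ, 0 < C ∧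
      ∀ ρ : ℝ, ρlow ≤ ρ → ρ ≤ ρhigh → ∀ n : ℝ, 0 ≤ n →
        ((ρ / 2 ≤ n ∧ n ≤ 2 * ρ → C * (n - ρ) ^ 2 ≤ relPressure γ n ρ) ∧
         (n < ρ / 2 ∨ 2 * ρ < n → C * (1 + n ^ γ) ≤ relPressure γ n ρ)) := by
  have hγ0 : (0:ℝ) < γ := by linarith
  -- interval for the quadratic lower bound
  set L : ℝ := ρlow / 2 with hLdef
  set U : ℝ := 2 * ρhigh with hUdef
  have hL : 0 < L := by simp only [hLdef]; linarith
  have hLU : L < U := by simp only [hLdef, hUdef]; linarith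
  set m : ℝ := min (L ^ (γ - 2)) (U ^ (γ - 2)) with hmdef
  have hm : 0 < m :=
    lt_min (Real.rpow_pos_of_pos hL _) (Real.rpow_pos_of_pos (hL.trans hLU) _)
  set K : ℝ := γ * (γ - 1) / 2 * m with hKdef
  have hK : 0 < K := by
    have h1 : 0 < γ * (γ - 1) / 2 := by
      have := mul_pos hγ0 (sub_pos.2 hγ); linarith only [this]
    exact mul_pos h1 hm
  -- derivative of φ = x^γ - K x^2
  have hder : ∀ x : ℝ, 0 < x →
      HasDerivAt (fun y : ℝ => y ^ γ - K * y ^ 2) (γ * x ^ (γ - 1) - K * (2 * x)) x := by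
    intro x hx
    have h1 : HasDerivAt (fun y : ℝ => y ^ γ) (γ * x ^ (γ - 1)) x :=
      Real.hasDerivAt_rpow_const (Or.inl hx.ne')
    have h2 : HasDerivAt (fun y : ℝ => K * y ^ 2) (K * (2 * x)) x := by
      simpa using (hasDerivAt_pow 2 x).const_mul K
    exact h1.sub h2
  -- convexity of φ on [L, U]
  have hconv : ConvexOn ℝ (Set.Icc L U) (fun y : ℝ => y ^ γ - K * y ^ 2) := by
    apply convexOn_of_hasDerivWithinAt2_nonneg (convex_Icc L U)
      (f' := fun x => γ * x ^ (γ - 1) - K * (2 * x))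
      (f'' := fun x => γ * ((γ - 1) * x ^ (γ - 2)) - K * 2)
    · apply ContinuousOn.sub
      · apply ContinuousOn.rpow_const continuousOn_id
        intro x hx
        exact Or.inl (ne_of_gt (lt_of_lt_of_le hL hx.1))
      · exact (continuous_const.mul (continuous_pow 2)).continuousOn
    · intro x hx
      rw [interior_Icc] at hx
      exact (hder x (hL.trans hx.1)).hasDerivWithinAt
    · intro x hx
      rw [interior_Icc] at hx
      have hx0 : 0 < x := hL.trans hx.1
      have h1 : HasDerivAt (fun y : ℝ => γ * y ^ (γ - 1)) (γ * ((γ - 1) * x ^ (γ - 1 - 1))) x :=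
        (Real.hasDerivAt_rpow_const (Or.inl hx0.ne')).const_mul γ
      have h2 : HasDerivAt (fun y : ℝ => K * (2 * y)) (K * 2) x := by
        have := (hasDerivAt_id x).const_mul (K * 2)
        simpa [mul_assoc] using this
      have h3 := h1.sub h2
      have he : γ - 1 - 1 = γ - 2 := by ring
      rw [he] at h3
      exact h3.hasDerivWithinAt
    · intro x hx
      rw [interior_Icc] at hx
      have hx0 : 0 < x := hL.trans hx.1
      have hge : m ≤ x ^ (γ - 2) := by
        rcases le_total γ 2 with h | h
        · exact (min_le_right _ _).trans
            (Real.rpow_le_rpow_of_nonpos hx0 hx.2.le (by linarith))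
        · exact (min_le_left _ _).trans
            (Real.rpow_le_rpow hL.le hx.1.le (by linarith))
      have hγγ : 0 ≤ γ * (γ - 1) := mul_nonneg hγ0.le (by linarith only [hγ])
      have h4 := mul_le_mul_of_nonneg_left hge hγγ
      simp only [hKdef]
      linarith only [h4]
  -- constants
  have hδ : 0 < (1/2 : ℝ) ^ γ + γ / 2 - 1 := by
    have h := one_add_mul_self_lt_rpow_one_add (s := -(1/2)) (by norm_num) (by norm_num) hγ
    have he : (1 : ℝ) + -(1/2) = 1/2 := by norm_num
    rw [he] at h
    linarith
  set P : ℝ := (2 : ℝ) ^ γ with hPdef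
  have hP : 0 < P := Real.rpow_pos_of_pos two_pos γ
  have hc' : 0 < P - 1 - γ := by
    have h := one_add_mul_self_lt_rpow_one_add (s := 1) (by norm_num) one_ne_zero hγ
    have he : (1 : ℝ) + 1 = 2 := by norm_num
    rw [he] at h
    simp only [hPdef]
    linarith
  set c : ℝ := (P - 1 - γ) / P with hcdef
  have hc : 0 < c := div_pos hc' hP
  have hcP : c * P = P - 1 - γ := div_mul_cancel₀ _ hP.ne'
  have hc1 : c ≤ 1 := by
    rw [hcdef, div_le_one hP]; linarith
  have hρlγ : 0 < ρlow ^ γ := Real.rpow_pos_of_pos hlow _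
  have hρhγ : 0 < ρhigh ^ γ := Real.rpow_pos_of_pos (hlow.trans hlh) _
  set δ : ℝ := (1/2 : ℝ) ^ γ + γ / 2 - 1 with hδdef
  set C2 : ℝ := ρlow ^ γ * δ / (1 + ρhigh ^ γ) with hC2def
  have hC2 : 0 < C2 := div_pos (mul_pos hρlγ hδ) (by linarith)
  set C3 : ℝ := min (c / 2) (c * (P * ρlow ^ γ) / 2) with hC3def
  have hC3 : 0 < C3 := by
    have h0 := mul_pos hc (mul_pos hP hρlγ)
    exact lt_min (by linarith) (by linarith)
  clear_value L U m K P c δ C2 C3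
  refine ⟨min K (min C2 C3), lt_min hK (lt_min hC2 hC3), ?_⟩
  intro ρ hρl hρh n hn0
  have hρ0 : 0 < ρ := hlow.trans_le hρl
  set C : ℝ := min K (min C2 C3) with hCdef
  clear_value C
  have hCpos : 0 < C := by rw [hCdef]; exact lt_min hK (lt_min hC2 hC3)
  have hCK : C ≤ K := by rw [hCdef]; exact min_le_left _ _
  have hCC2 : C ≤ C2 := by rw [hCdef]; exact (min_le_right _ _).trans (min_le_left _ _)
  have hCC3 : C ≤ C3 := by rw [hCdef]; exact (min_le_right _ _).trans (min_le_right _ _)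
  have hCc2 : C ≤ c / 2 := hCC3.trans (hC3def ▸ min_le_left _ _)
  have hCc3 : C ≤ c * (P * ρlow ^ γ) / 2 := hCC3.trans (hC3def ▸ min_le_right _ _)
  constructor
  · -- middle regime
    rintro ⟨h1, h2⟩
    have hρD : ρ ∈ Set.Icc L U := ⟨by simp only [hLdef]; linarith, by simp only [hUdef]; linarith⟩
    have hnD : n ∈ Set.Icc L U := ⟨by simp only [hLdef]; linarith, by simp only [hUdef]; linarith⟩
    have ht := relPressure_aux_tangent hconv hρD hnD (hder ρ hρ0)
    simp only [relPressure]
    have h3 := mul_le_mul_of_nonneg_right hCK (sq_nonneg (n - ρ))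
    linarith only [ht, h3]
  · rintro (hlt | hgt)
    · -- small n regime
      have hb := relPressure_aux_bern γ hγ (half_pos hρ0) hn0
      have hmono : (ρ/2) ^ (γ - 1) ≤ ρ ^ (γ - 1) :=
        Real.rpow_le_rpow (by positivity) (by linarith) (by linarith)
      have hstep : γ * ρ ^ (γ - 1) * (n - ρ/2) ≤ γ * (ρ/2) ^ (γ - 1) * (n - ρ/2) := by
        have h1 : γ * (ρ/2) ^ (γ - 1) ≤ γ * ρ ^ (γ - 1) :=
          mul_le_mul_of_nonneg_left hmono hγ0.le
        have h2 : n - ρ/2 ≤ 0 := by linarith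
        exact mul_le_mul_of_nonpos_right h1 h2
      have e2 : (ρ/2) ^ γ = ρ ^ γ * (1/2 : ℝ) ^ γ := by
        rw [← Real.mul_rpow hρ0.le (by norm_num : (0:ℝ) ≤ 1/2)]
        ring_nf
      have e3 : ρ ^ (γ - 1) * ρ = ρ ^ γ := by
        rw [← Real.rpow_add_one hρ0.ne' (γ - 1)]
        norm_num
      have key : ρ ^ γ * δ ≤ relPressure γ n ρ := by
        have h7 : (ρ/2) ^ γ + γ * ρ ^ (γ - 1) * (n - ρ/2) ≤ n ^ γ := by linarith
        simp only [relPressure, hδdef]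
        have h8 : ρ ^ γ * ((1/2 : ℝ) ^ γ + γ/2 - 1)
            = (ρ/2) ^ γ + γ * ρ ^ (γ - 1) * (n - ρ/2) - ρ ^ γ - γ * ρ ^ (γ - 1) * (n - ρ) := by
          rw [e2]; linear_combination (-(γ/2)) * e3
        linarith only [h7, h8]
      have hnγ : n ^ γ ≤ ρhigh ^ γ :=
        Real.rpow_le_rpow hn0 (by linarith) (by linarith)
      have hργ : ρlow ^ γ ≤ ρ ^ γ := Real.rpow_le_rpow hlow.le hρl (by linarith)
      have hC2val : C2 * (1 + ρhigh ^ γ) = ρlow ^ γ * δ := by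
        rw [hC2def]
        field_simp
      have hmul : C * (1 + n ^ γ) ≤ C2 * (1 + ρhigh ^ γ) := by
        have hn' : 0 ≤ n ^ γ := Real.rpow_nonneg hn0 γ
        apply mul_le_mul hCC2 (by linarith) (by linarith) hC2.le
      have hfin : ρlow ^ γ * δ ≤ ρ ^ γ * δ := mul_le_mul_of_nonneg_right hργ hδ.le
      linarith only [key, hmul, hC2val, hfin]
    · -- large n regime
      have hb := relPressure_aux_bern γ hγ (a := 2 * ρ) (by linarith) hn0
      have e1 : (2 * ρ) ^ γ = P * ρ ^ γ := by
        rw [hPdef]; exact Real.mul_rpow (by norm_num) hρ0.le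
      have e2 : (2 * ρ) ^ (γ - 1) = (2:ℝ) ^ (γ - 1) * ρ ^ (γ - 1) :=
        Real.mul_rpow (by norm_num) hρ0.le
      have e3 : (2:ℝ) ^ (γ - 1) = P / 2 := by
        rw [hPdef, Real.rpow_sub_one (by norm_num : (2:ℝ) ≠ 0) γ]
      have e4 : ρ ^ (γ - 1) * ρ = ρ ^ γ := by
        rw [← Real.rpow_add_one hρ0.ne' (γ - 1)]
        norm_num
      have h1c : (1 - c) * P = 1 + γ := by linear_combination -hcP
      have hB : 0 ≤ ρ ^ (γ - 1) := Real.rpow_nonneg hρ0.le _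
      have key : c * n ^ γ ≤ relPressure γ n ρ := by
        have hstep : (1 - c) * ((2*ρ) ^ γ + γ * (2*ρ) ^ (γ - 1) * (n - 2*ρ)) ≤ (1 - c) * n ^ γ :=
          mul_le_mul_of_nonneg_left hb (by linarith)
        have expand : (1 - c) * ((2*ρ) ^ γ + γ * (2*ρ) ^ (γ - 1) * (n - 2*ρ))
            = (1 + γ) * ρ ^ γ + γ * ((1 + γ)/2) * ρ ^ (γ - 1) * (n - 2*ρ) := by
          rw [e1, e2, e3]
          linear_combination (ρ ^ γ + γ / 2 * ρ ^ (γ - 1) * (n - 2*ρ)) * h1c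
        have tail : 0 ≤ γ * (γ - 1) / 2 * ρ ^ (γ - 1) * (n - 2*ρ) := by
          refine mul_nonneg (mul_nonneg ?_ hB) (by linarith only [hgt])
          have := mul_nonneg hγ0.le (sub_nonneg.2 hγ.le)
          linarith only [this]
        have h9 : (1 + γ) * ρ ^ γ + γ * ((1 + γ)/2) * ρ ^ (γ - 1) * (n - 2*ρ)
            = ρ ^ γ + γ * ρ ^ (γ - 1) * (n - ρ) + γ * (γ - 1) / 2 * ρ ^ (γ - 1) * (n - 2*ρ)
              + γ * (ρ ^ γ - ρ ^ (γ - 1) * ρ) := by ring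
        have e5 : γ * (ρ ^ γ - ρ ^ (γ - 1) * ρ) = 0 := by rw [e4]; ring
        simp only [relPressure]
        linarith only [hstep, expand, tail, e5, h9]
      have hn2ρ : (2*ρ) ^ γ ≤ n ^ γ :=
        Real.rpow_le_rpow (by linarith) (by linarith) (by linarith)
      have hρP : P * ρlow ^ γ ≤ n ^ γ := by
        have hργ : ρlow ^ γ ≤ ρ ^ γ := Real.rpow_le_rpow hlow.le hρl (by linarith)
        have h10 := mul_le_mul_of_nonneg_left hργ hP.le
        linarith only [h10, e1, hn2ρ]
      have hNn : 0 ≤ n ^ γ := Real.rpow_nonneg hn0 _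
      have h5 : c * (P * ρlow ^ γ) ≤ c * n ^ γ := mul_le_mul_of_nonneg_left hρP hc.le
      have h6 : C * n ^ γ ≤ c / 2 * n ^ γ := mul_le_mul_of_nonneg_right hCc2 hNn
      linarith only [key, h5, h6, hCc3]
end

section
/- Let ρ : ℝ² → ℝ be a C³ function with ρ(x) > 0 for all x ∈ ℝ². Then for all x ∈ ℝ² and each j ∈ {1,2}: Σ_{k=1,2} ∂_k((∂_kρ · ∂_jρ)/ρ) − ∂_j(Δρ) = −2 ρ ∂_j((Δ√ρ)/√ρ), where Δ = ∂₁∂₁ + ∂₂∂₂ and √ρ denotes the pointwise square root. Equivalently, (1/4)∇·((∇ρ ⊗ ∇ρ)/ρ) − (1/4)Δ∇ρ = −(ρ/2)∇((Δ√ρ)/√ρ). -/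
noncomputable section

/-- Partial derivative in the first variable of a function on `ℝ²`. -/
def pd1 {E : Type*} [NormedAddCommGroup E] [NormedSpace ℝ E] (f : ℝ × ℝ → E) (p : ℝ × ℝ) : E :=
  fderiv ℝ f p (1, 0)

/-- Partial derivative in the second variable of a function on `ℝ²`. -/
def pd2 {E : Type*} [NormedAddCommGroup E] [NormedSpace ℝ E] (f : ℝ × ℝ → E) (p : ℝ × ℝ) : E :=
  fderiv ℝ f p (0, 1)

/-- The Laplacian `Δ = ∂₁∂₁ + ∂₂∂₂` on `ℝ²`. -/
def lap (f : ℝ × ℝ → ℝ) (p : ℝ × ℝ) : ℝ :=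
  pd1 (pd1 f) p + pd2 (pd2 f) p

/-! Write `ρ = ψ²` with `ψ = √ρ`. Then `∂ₖρ ∂ⱼρ / ρ = 4 ∂ₖψ ∂ⱼψ` and `Δρ = 2ψΔψ + 2|∇ψ|²`, so by the
product rule and the symmetry of second derivatives the left-hand side collapses to
`2 (Δψ ∂ⱼψ - ψ ∂ⱼΔψ)`, which is `-2ψ² ∂ⱼ(Δψ/ψ)`. -/

section Calculus

variable {𝕜 E : Type*} [NontriviallyNormedField 𝕜] [NormedAddCommGroup E] [NormedSpace 𝕜 E]
  {f g : E → 𝕜} {p : E}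

theorem fderiv_fun_mul_apply (hf : DifferentiableAt 𝕜 f p) (hg : DifferentiableAt 𝕜 g p) (v : E) :
    fderiv 𝕜 (fun q => f q * g q) p v = fderiv 𝕜 f p v * g p + f p * fderiv 𝕜 g p v := by
  simp only [fderiv_fun_mul hf hg, add_apply, smul_apply, smul_eq_mul]
  ring

theorem fderiv_fun_sq_apply (hf : DifferentiableAt 𝕜 f p) (v : E) :
    fderiv 𝕜 (fun q => f q ^ 2) p v = 2 * f p * fderiv 𝕜 f p v := by
  simp only [sq, fderiv_fun_mul_apply hf hf]
  ring

theorem fderiv_fun_div_apply (hf : DifferentiableAt 𝕜 f p) (hg : DifferentiableAt 𝕜 g p)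
    (hg0 : g p ≠ 0) (v : E) :
    fderiv 𝕜 (fun q => f q / g q) p v
      = (fderiv 𝕜 f p v * g p - f p * fderiv 𝕜 g p v) / g p ^ 2 := by
  have hinv : HasFDerivAt (fun q => (g q)⁻¹) (-(g p ^ 2)⁻¹ • fderiv 𝕜 g p) p :=
    (hasDerivAt_inv hg0).comp_hasFDerivAt p hg.hasFDerivAt
  simp only [div_eq_mul_inv, fderiv_fun_mul_apply hf hinv.differentiableAt, hinv.fderiv,
    smul_apply, smul_eq_mul]
  field_simp
  ring

theorem fderiv_fderiv_sq_apply (hf : Differentiable 𝕜 f) {w : E}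
    (hfw : DifferentiableAt 𝕜 (fun q => fderiv 𝕜 f q w) p) (v : E) :
    fderiv 𝕜 (fun q => fderiv 𝕜 (fun r => f r ^ 2) q w) p v
      = 2 * (fderiv 𝕜 f p v * fderiv 𝕜 f p w + f p * fderiv 𝕜 (fun q => fderiv 𝕜 f q w) p v) := by
  have hsq : (fun q => fderiv 𝕜 (fun r => f r ^ 2) q w) = fun q => 2 * f q * fderiv 𝕜 f q w :=
    funext fun q => fderiv_fun_sq_apply (hf q) w
  rw [hsq, fderiv_fun_mul_apply ((hf p).const_mul 2) hfw, fderiv_const_mul (hf p)]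
  simp only [smul_apply, smul_eq_mul]
  ring

end Calculus

theorem fderiv_fderiv_apply_comm {𝕜 E F : Type*} [RCLike 𝕜] [NormedAddCommGroup E]
    [NormedSpace 𝕜 E] [NormedAddCommGroup F] [NormedSpace 𝕜 F] {f : E → F} {p : E}
    (hf : ContDiffAt 𝕜 2 f p) (v w : E) :
    fderiv 𝕜 (fun q => fderiv 𝕜 f q w) p v = fderiv 𝕜 (fun q => fderiv 𝕜 f q v) p w := by
  have hf' : DifferentiableAt 𝕜 (fderiv 𝕜 f) p :=
    (hf.fderiv_right (m := 1) le_rfl).differentiableAt one_ne_zero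
  rw [fderiv_clm_apply hf' (differentiableAt_const w),
    fderiv_clm_apply hf' (differentiableAt_const v)]
  simpa using hf.isSymmSndFDerivAt (by simp) v w

theorem contDiff_lap {n : WithTop ℕ∞} {f : ℝ × ℝ → ℝ} (hf : ContDiff ℝ (n + 2) f) :
    ContDiff ℝ n (lap f) := by
  have hD : ∀ {m : WithTop ℕ∞} {g : ℝ × ℝ → ℝ}, ContDiff ℝ (m + 1) g → ∀ w,
      ContDiff ℝ m fun q => fderiv ℝ g q w :=
    fun hg w => (hg.fderiv_right le_rfl).clm_apply contDiff_const
  have hf' : ContDiff ℝ (n + 1 + 1) f := by rwa [add_assoc, one_add_one_eq_two]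
  exact (hD (hD hf' _) _).add (hD (hD hf' _) _)

theorem lap_sq {ψ : ℝ × ℝ → ℝ} (hψ : ContDiff ℝ 2 ψ) :
    lap (fun r => ψ r ^ 2) = fun q => 2 * (ψ q * lap ψ q + (pd1 ψ q ^ 2 + pd2 ψ q ^ 2)) := by
  have hψ' : Differentiable ℝ (fderiv ℝ ψ) :=
    (hψ.fderiv_right (m := 1) le_rfl).differentiable one_ne_zero
  funext q
  unfold lap pd1 pd2
  rw [fderiv_fderiv_sq_apply (hψ.differentiable two_ne_zero) (by fun_prop),
    fderiv_fderiv_sq_apply (hψ.differentiable two_ne_zero) (by fun_prop)]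
  ring

theorem bohm_identity_of_eq_sq {ρ ψ : ℝ × ℝ → ℝ} (hψ : ContDiff ℝ 3 ψ) (hψ0 : ∀ q, ψ q ≠ 0)
    (hρ : ∀ q, ρ q = ψ q ^ 2) (v p : ℝ × ℝ) :
    (fderiv ℝ (fun q => pd1 ρ q * fderiv ℝ ρ q v / ρ q) p (1, 0)
        + fderiv ℝ (fun q => pd2 ρ q * fderiv ℝ ρ q v / ρ q) p (0, 1))
        - fderiv ℝ (lap ρ) p v
      = -2 * ρ p * fderiv ℝ (fun q => lap ψ q / ψ q) p v := by
  obtain rfl : ρ = fun q => ψ q ^ 2 := funext hρ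
  have hψd : Differentiable ℝ ψ := hψ.differentiable (by norm_num)
  have hψ'd : Differentiable ℝ (fderiv ℝ ψ) :=
    (hψ.fderiv_right (m := 2) (by norm_num)).differentiable two_ne_zero
  have hlap : Differentiable ℝ (lap ψ) := (contDiff_lap (n := 1) hψ).differentiable one_ne_zero
  have hflux : ∀ w, (fun q => fderiv ℝ (fun r => ψ r ^ 2) q w * fderiv ℝ (fun r => ψ r ^ 2) q v
      / ψ q ^ 2) = fun q => 4 * (fderiv ℝ ψ q w * fderiv ℝ ψ q v) := by
    intro w
    funext q
    rw [fderiv_fun_sq_apply (hψd q), fderiv_fun_sq_apply (hψd q)]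
    field_simp [hψ0 q]
    ring
  rw [lap_sq (hψ.of_le (by norm_num))]
  unfold pd1 pd2
  rw [hflux, hflux]
  simp (disch := fun_prop) only [fderiv_fun_mul_apply, fderiv_fun_add, fderiv_const_mul,
    fderiv_fun_sq_apply, add_apply, smul_apply, smul_eq_mul]
  have hlap_p : lap ψ p = fderiv ℝ (fun q => fderiv ℝ ψ q (1, 0)) p (1, 0)
      + fderiv ℝ (fun q => fderiv ℝ ψ q (0, 1)) p (0, 1) := rfl
  rw [fderiv_fun_div_apply (hlap p) (hψd p) (hψ0 p),
    fderiv_fderiv_apply_comm (hψ.contDiffAt.of_le (by norm_num)) (1, 0) v,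
    fderiv_fderiv_apply_comm (hψ.contDiffAt.of_le (by norm_num)) (0, 1) v, hlap_p]
  field_simp [hψ0 p]
  ring

/-- Bohm quantum-pressure identity:
`Σ_k ∂_k((∂_kρ ∂_jρ)/ρ) − ∂_j(Δρ) = −2 ρ ∂_j((Δ√ρ)/√ρ)` for `j = 1, 2`. -/
theorem bohm_pressure_identity (ρ : ℝ × ℝ → ℝ)
    (hρ : ContDiff ℝ 3 ρ) (hpos : ∀ p : ℝ × ℝ, 0 < ρ p) :
    ∀ p : ℝ × ℝ,
      ((pd1 (fun q => pd1 ρ q * pd1 ρ q / ρ q) p + pd2 (fun q => pd2 ρ q * pd1 ρ q / ρ q) p)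
          - pd1 (fun q => lap ρ q) p
        = -2 * ρ p * pd1 (fun q => lap (fun r => Real.sqrt (ρ r)) q / Real.sqrt (ρ q)) p)
      ∧
      ((pd1 (fun q => pd1 ρ q * pd2 ρ q / ρ q) p + pd2 (fun q => pd2 ρ q * pd2 ρ q / ρ q) p)
          - pd2 (fun q => lap ρ q) p
        = -2 * ρ p * pd2 (fun q => lap (fun r => Real.sqrt (ρ r)) q / Real.sqrt (ρ q)) p) := by
  have hψ : ContDiff ℝ 3 fun r => Real.sqrt (ρ r) := hρ.sqrt fun r => (hpos r).ne'
  have hψ0 : ∀ r, Real.sqrt (ρ r) ≠ 0 := fun r => (Real.sqrt_pos.mpr (hpos r)).ne'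
  have hρψ : ∀ r, ρ r = Real.sqrt (ρ r) ^ 2 := fun r => (Real.sq_sqrt (hpos r).le).symm
  exact fun p => ⟨bohm_identity_of_eq_sq hψ hψ0 hρψ (1, 0) p,
    bohm_identity_of_eq_sq hψ hψ0 hρψ (0, 1) p⟩

end
end

section
/- Assume ψ is C², A₀, A₁, A₂ are C¹, and equation (E1) holds at every point of ℝ × ℝ². Then at every point of ℝ × ℝ²: ∂_t(|ψ|² − ε^{1+2δ} Im(conj(ψ) D_t ψ)) + ∂₁(ε Im(conj(ψ) D₁ψ)) + ∂₂(ε Im(conj(ψ) D₂ψ)) = 0. That is, the mass conservation law ∂_t(ρ − ρ_R) + ∇·J = 0 holds with ρ := |ψ|², ρ_R := ε^{1+2δ} Im(conj(ψ) D_t ψ), and J := ε Im(conj(ψ) Dψ). -/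
noncomputable section

/-- Spacetime points `(t, x₁, x₂) ∈ ℝ × ℝ²`. -/
abbrev Spt := ℝ × ℝ × ℝ

/-- Partial derivative in the time variable. -/
def ptd {E : Type*} [NormedAddCommGroup E] [NormedSpace ℝ E] (f : Spt → E) (p : Spt) : E :=
  fderiv ℝ f p (1, 0, 0)

/-- Partial derivative in the first spatial variable. -/
def px1 {E : Type*} [NormedAddCommGroup E] [NormedSpace ℝ E] (f : Spt → E) (p : Spt) : E :=
  fderiv ℝ f p (0, 1, 0)

/-- Partial derivative in the second spatial variable. -/
def px2 {E : Type*} [NormedAddCommGroup E] [NormedSpace ℝ E] (f : Spt → E) (p : Spt) : E :=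
  fderiv ℝ f p (0, 0, 1)

/-- Covariant time derivative `D_t ψ = ∂_t ψ − i ε⁻¹ A₀ ψ`. -/
def Dt (ε : ℝ) (A₀ : Spt → ℝ) (ψ : Spt → ℂ) (p : Spt) : ℂ :=
  ptd ψ p - Complex.I * ((ε⁻¹ : ℝ) : ℂ) * ((A₀ p : ℝ) : ℂ) * ψ p

/-- Covariant derivative `D₁ ψ = ∂₁ ψ − i ε^{δ−1} A₁ ψ`. -/
def D1 (ε δ : ℝ) (A₁ : Spt → ℝ) (ψ : Spt → ℂ) (p : Spt) : ℂ :=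
  px1 ψ p - Complex.I * ((ε ^ (δ - 1) : ℝ) : ℂ) * ((A₁ p : ℝ) : ℂ) * ψ p

/-- Covariant derivative `D₂ ψ = ∂₂ ψ − i ε^{δ−1} A₂ ψ`. -/
def D2 (ε δ : ℝ) (A₂ : Spt → ℝ) (ψ : Spt → ℂ) (p : Spt) : ℂ :=
  px2 ψ p - Complex.I * ((ε ^ (δ - 1) : ℝ) : ℂ) * ((A₂ p : ℝ) : ℂ) * ψ p

/-!
For a covariant derivative `D = ∂_v − i a B` one has `∂_v |ψ|² = 2 Re(ψ̄ Dψ)` and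
`∂_v Im(ψ̄ Dψ) = Im(ψ̄ DDψ)`, the gauge terms cancelling because `B` is real. Hence the left-hand
side of the conservation law equals `(2/ε) Im(ψ̄ · (E1))`, which vanishes: the term `i ε D_t ψ`
yields `ε Re(ψ̄ D_t ψ)`, and the potential term is real.
-/

open Complex ComplexConjugate

section CovariantDerivative

variable {E : Type*} [NormedAddCommGroup E] [NormedSpace ℝ E] {p : E}

def covDeriv (a : ℝ) (B : E → ℝ) (v : E) (ψ : E → ℂ) (p : E) : ℂ :=
  fderiv ℝ ψ p v - I * (a : ℂ) * (B p : ℂ) * ψ p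

lemma fderiv_conj_mul_apply {f g : E → ℂ} (hf : DifferentiableAt ℝ f p)
    (hg : DifferentiableAt ℝ g p) (v : E) :
    fderiv ℝ (fun q => conj (f q) * g q) p v
      = conj (fderiv ℝ f p v) * g p + conj (f p) * fderiv ℝ g p v := by
  change fderiv ℝ (fun q => star (f q) * g q) p v = _
  rw [fderiv_fun_mul hf.star hg, fderiv_star]
  simp [add_comm, mul_comm]

lemma fderiv_re_apply {f : E → ℂ} (hf : DifferentiableAt ℝ f p) (v : E) :
    fderiv ℝ (fun q => (f q).re) p v = (fderiv ℝ f p v).re := by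
  change fderiv ℝ (reCLM ∘ f) p v = _
  rw [(reCLM.hasFDerivAt.comp p hf.hasFDerivAt).fderiv]
  rfl

lemma fderiv_im_apply {f : E → ℂ} (hf : DifferentiableAt ℝ f p) (v : E) :
    fderiv ℝ (fun q => (f q).im) p v = (fderiv ℝ f p v).im := by
  change fderiv ℝ (imCLM ∘ f) p v = _
  rw [(imCLM.hasFDerivAt.comp p hf.hasFDerivAt).fderiv]
  rfl

lemma DifferentiableAt.im_conj_mul {f g : E → ℂ} (hf : DifferentiableAt ℝ f p)
    (hg : DifferentiableAt ℝ g p) : DifferentiableAt ℝ (fun q => (conj (f q) * g q).im) p :=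
  imCLM.differentiableAt.comp p (hf.star.mul hg)

lemma DifferentiableAt.normSq {f : E → ℂ} (hf : DifferentiableAt ℝ f p) :
    DifferentiableAt ℝ (fun q => normSq (f q)) p := by
  simpa only [normSq_eq_norm_sq] using hf.norm_sq ℂ

lemma fderiv_normSq_apply {ψ : E → ℂ} (hψ : DifferentiableAt ℝ ψ p) (a : ℝ) (B : E → ℝ)
    (v : E) :
    fderiv ℝ (fun q => normSq (ψ q)) p v = 2 * (conj (ψ p) * covDeriv a B v ψ p).re := by
  have hre : (fun q => normSq (ψ q)) = fun q => (conj (ψ q) * ψ q).re := by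
    ext q; simp [normSq_apply]
  rw [hre, fderiv_re_apply (f := fun q => conj (ψ q) * ψ q) (hψ.star.mul hψ),
    fderiv_conj_mul_apply hψ hψ, covDeriv]
  simp [mul_re, mul_im]
  ring

lemma fderiv_im_conj_mul_covDeriv {ψ : E → ℂ} {a : ℝ} {B : E → ℝ} {v : E}
    (hψ : DifferentiableAt ℝ ψ p) (hDψ : DifferentiableAt ℝ (covDeriv a B v ψ) p) :
    fderiv ℝ (fun q => (conj (ψ q) * covDeriv a B v ψ q).im) p v
      = (conj (ψ p) * covDeriv a B v (covDeriv a B v ψ) p).im := by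
  rw [fderiv_im_apply (f := fun q => conj (ψ q) * covDeriv a B v ψ q) (hψ.star.mul hDψ),
    fderiv_conj_mul_apply hψ hDψ]
  have hDψ_def : fderiv ℝ ψ p v = covDeriv a B v ψ p + I * a * B p * ψ p := by
    rw [covDeriv]; ring
  have hDDψ_def : covDeriv a B v (covDeriv a B v ψ) p
      = fderiv ℝ (covDeriv a B v ψ) p v - I * a * B p * covDeriv a B v ψ p := rfl
  -- `∂_v (ψ̄ Dψ) = |Dψ|² + ψ̄ DDψ`, and `|Dψ|²` is real
  rw [hDψ_def, hDDψ_def]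
  simp [mul_im, mul_re]
  ring

lemma ContDiff.differentiable_covDeriv {ψ : E → ℂ} {B : E → ℝ} (hψ : ContDiff ℝ 2 ψ)
    (hB : Differentiable ℝ B) (a : ℝ) (v : E) : Differentiable ℝ (covDeriv a B v ψ) := by
  have hψv : Differentiable ℝ fun q => fderiv ℝ ψ q v :=
    ((hψ.fderiv_right one_add_one_eq_two.le).differentiable one_ne_zero).clm_apply
      (differentiable_const v)
  exact hψv.sub (((differentiable_const _).mul (ofRealCLM.differentiable.comp hB)).mul
    (hψ.differentiable two_ne_zero))

end CovariantDerivative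

lemma Dt_eq_covDeriv (ε : ℝ) (A₀ : Spt → ℝ) : Dt ε A₀ = covDeriv ε⁻¹ A₀ (1, 0, 0) := rfl

lemma D1_eq_covDeriv (ε δ : ℝ) (A₁ : Spt → ℝ) :
    D1 ε δ A₁ = covDeriv (ε ^ (δ - 1)) A₁ (0, 1, 0) := rfl

lemma D2_eq_covDeriv (ε δ : ℝ) (A₂ : Spt → ℝ) :
    D2 ε δ A₂ = covDeriv (ε ^ (δ - 1)) A₂ (0, 0, 1) := rfl

theorem csh_mass_conservation_general (ε δ γ : ℝ) (hε : 0 < ε)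
    (ψ : Spt → ℂ) (A₀ A₁ A₂ : Spt → ℝ)
    (hψ : ContDiff ℝ 2 ψ) (hA₀ : ContDiff ℝ 1 A₀)
    (hA₁ : ContDiff ℝ 1 A₁) (hA₂ : ContDiff ℝ 1 A₂)
    (hE1 : ∀ p : Spt,
      Complex.I * (ε : ℂ) * Dt ε A₀ ψ p
        - ((ε ^ (2 + 2 * δ) / 2 : ℝ) : ℂ) * Dt ε A₀ (Dt ε A₀ ψ) p
        + ((ε ^ 2 / 2 : ℝ) : ℂ) *
            (D1 ε δ A₁ (D1 ε δ A₁ ψ) p + D2 ε δ A₂ (D2 ε δ A₂ ψ) p)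
        - ((γ / (γ - 1) * Complex.normSq (ψ p) ^ (γ - 1) : ℝ) : ℂ) * ψ p = 0) :
    ∀ p : Spt,
      ptd (fun q => Complex.normSq (ψ q)
            - ε ^ (1 + 2 * δ) * ((starRingEnd ℂ) (ψ q) * Dt ε A₀ ψ q).im) p
        + px1 (fun q => ε * ((starRingEnd ℂ) (ψ q) * D1 ε δ A₁ ψ q).im) p
        + px2 (fun q => ε * ((starRingEnd ℂ) (ψ q) * D2 ε δ A₂ ψ q).im) p = 0 := by
  intro p
  have hψ' := hψ.differentiable two_ne_zero p
  have hDt := hψ.differentiable_covDeriv (hA₀.differentiable one_ne_zero) ε⁻¹ (1, 0, 0) p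
  have hD1 := hψ.differentiable_covDeriv (hA₁.differentiable one_ne_zero) (ε ^ (δ - 1)) (0, 1, 0) p
  have hD2 := hψ.differentiable_covDeriv (hA₂.differentiable one_ne_zero) (ε ^ (δ - 1)) (0, 0, 1) p
  have hE := congrArg (fun z => (conj (ψ p) * z).im) (hE1 p)
  simp only [Dt_eq_covDeriv, D1_eq_covDeriv, D2_eq_covDeriv, ptd, px1, px2] at hE ⊢
  rw [fderiv_fun_sub hψ'.normSq ((hψ'.im_conj_mul hDt).const_mul _),
    fderiv_const_mul (hψ'.im_conj_mul hDt), fderiv_const_mul (hψ'.im_conj_mul hD1),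
    fderiv_const_mul (hψ'.im_conj_mul hD2)]
  simp only [sub_apply, smul_apply, smul_eq_mul]
  rw [fderiv_normSq_apply hψ' ε⁻¹ A₀, fderiv_im_conj_mul_covDeriv hψ' hDt,
    fderiv_im_conj_mul_covDeriv hψ' hD1, fderiv_im_conj_mul_covDeriv hψ' hD2]
  have hpow : ε ^ (2 + 2 * δ) = ε * ε ^ (1 + 2 * δ) := by
    rw [show 2 + 2 * δ = 1 + (1 + 2 * δ) by ring, Real.rpow_add hε, Real.rpow_one]
  -- the left-hand side is `(2/ε) Im(ψ̄ · (E1))`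
  refine (mul_eq_zero.mp ?_).resolve_left (half_pos hε).ne'
  simp only [mul_im, mul_re, sub_im, sub_re, add_im, add_re, conj_re, conj_im, I_re, I_im,
    ofReal_re, ofReal_im, mul_zero, zero_im] at hE ⊢
  rw [hpow] at hE
  linear_combination hE

/-- Mass conservation law for the scaled Chern–Simons–Higgs system:
`∂_t(ρ − ρ_R) + ∇·J = 0` with `ρ = |ψ|²`, `ρ_R = ε^{1+2δ} Im(conj ψ · D_t ψ)`,
`J = ε Im(conj ψ · Dψ)`. -/
theorem csh_mass_conservation (ε δ γ : ℝ) (hε : 0 < ε) (hδ : 0 < δ) (hγ : 1 < γ)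
    (ψ : Spt → ℂ) (A₀ A₁ A₂ : Spt → ℝ)
    (hψ : ContDiff ℝ 2 ψ) (hA₀ : ContDiff ℝ 1 A₀)
    (hA₁ : ContDiff ℝ 1 A₁) (hA₂ : ContDiff ℝ 1 A₂)
    (hE1 : ∀ p : Spt,
      Complex.I * (ε : ℂ) * Dt ε A₀ ψ p
        - ((ε ^ (2 + 2 * δ) / 2 : ℝ) : ℂ) * Dt ε A₀ (Dt ε A₀ ψ) p
        + ((ε ^ 2 / 2 : ℝ) : ℂ) *
            (D1 ε δ A₁ (D1 ε δ A₁ ψ) p + D2 ε δ A₂ (D2 ε δ A₂ ψ) p)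
        - ((γ / (γ - 1) * Complex.normSq (ψ p) ^ (γ - 1) : ℝ) : ℂ) * ψ p = 0) :
    ∀ p : Spt,
      ptd (fun q => Complex.normSq (ψ q)
            - ε ^ (1 + 2 * δ) * ((starRingEnd ℂ) (ψ q) * Dt ε A₀ ψ q).im) p
        + px1 (fun q => ε * ((starRingEnd ℂ) (ψ q) * D1 ε δ A₁ ψ q).im) p
        + px2 (fun q => ε * ((starRingEnd ℂ) (ψ q) * D2 ε δ A₂ ψ q).im) p = 0 :=
  csh_mass_conservation_general ε δ γ hε ψ A₀ A₁ A₂ hψ hA₀ hA₁ hA₂ hE1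

end
end

section
/- Let c, ħ, κ, m > 0 be real constants and W : ℝ → ℝ any function. Let φ : ℝ × ℝ² → ℂ be C² and A₀, A₁, A₂ : ℝ × ℝ² → ℝ be C¹, and set D₀f := (1/c)∂_t f − (i/(cħ)) A₀ f and D_j f := ∂_j f − (i/(cħ)) A_j f for j = 1, 2. Assume that at every point of ℝ × ℝ²: ħ²(D₀D₀φ − D₁D₁φ − D₂D₂φ) + m²c²φ + 2m W(2m|φ|²) φ = 0, κ((1/c)∂_t A₁ − ∂₁A₀) = −2ħ Im(conj(φ) D₂φ), and κ((1/c)∂_t A₂ − ∂₂A₀) = 2ħ Im(conj(φ) D₁φ). Then at every point of ℝ × ℝ²: ∂_t( (κ/c)(∂₁A₂ − ∂₂A₁) − (2ħ/c) Im(conj(φ) D₀φ) ) = 0. In particular, if the Gauss-law constraint (κ/c)(∂₁A₂ − ∂₂A₁) = (2ħ/c) Im(conj(φ) D₀φ) holds at time t = 0, it holds for all times. -/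
noncomputable section

/-- Covariant derivative `D₀ f = (1/c)∂_t f − (i/(c·hbar)) A₀ f`. -/
def D0 (c hbar : ℝ) (A₀ : Spt → ℝ) (f : Spt → ℂ) (p : Spt) : ℂ :=
  ((1 / c : ℝ) : ℂ) * ptd f p
    - Complex.I / ((c : ℂ) * (hbar : ℂ)) * ((A₀ p : ℝ) : ℂ) * f p

/-- Covariant derivative `D₁ f = ∂₁ f − (i/(c·hbar)) A₁ f`. -/
def Dsp1 (c hbar : ℝ) (A₁ : Spt → ℝ) (f : Spt → ℂ) (p : Spt) : ℂ :=
  px1 f p - Complex.I / ((c : ℂ) * (hbar : ℂ)) * ((A₁ p : ℝ) : ℂ) * f p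

/-- Covariant derivative `D₂ f = ∂₂ f − (i/(c·hbar)) A₂ f`. -/
def Dsp2 (c hbar : ℝ) (A₂ : Spt → ℝ) (f : Spt → ℂ) (p : Spt) : ℂ :=
  px2 f p - Complex.I / ((c : ℂ) * (hbar : ℂ)) * ((A₂ p : ℝ) : ℂ) * f p

/-! With `ρ_μ = Im (conj φ · D_μ φ)`, the potential term of the field equation is real, so
`Im (conj φ · (D₀D₀ - D₁D₁ - D₂D₂) φ) = 0`; as the gauge terms of a covariant derivative drop out
of `∂ Im (conj φ · D φ)`, this is the continuity equation `∂_t ρ₀ = c (∂₁ρ₁ + ∂₂ρ₂)`. The gauge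
equations read `∂_t A_j = ∂_j (c A₀) + B_j` with `B_j` built from the currents, so the curl
`∂₁A₂ - ∂₂A₁` moves in time by `∫ (∂₁B₂ - ∂₂B₁) = (2ħ/κ) (ρ₀(t) - ρ₀(0))`.
Since `A` is only `C¹`, the `A₀`-contribution is removed in integrated form: integrating the gauge
equations in time exhibits `(A_j(t) - A_j(0) - ∫ B_j)` as the gradient of `P = ∫₀ᵗ c A₀`, a `C¹`
gradient field, so `P` is `C²` and Schwarz's theorem kills the curl of `∇P`. -/

namespace GaussLaw

open Complex ComplexConjugate

def covDeriv (a : ℝ) (v : Spt) (α : Spt → ℝ) (f : Spt → ℂ) (p : Spt) : ℂ :=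
  (a : ℂ) * fderiv ℝ f p v - I * (α p : ℂ) * f p

lemma D0_eq_covDeriv (c hbar : ℝ) (A : Spt → ℝ) :
    D0 c hbar A = covDeriv (1 / c) (1, 0, 0) (fun q => A q / (c * hbar)) := by
  ext f p
  simp only [D0, covDeriv, ptd]
  push_cast
  ring

lemma Dsp1_eq_covDeriv (c hbar : ℝ) (A : Spt → ℝ) :
    Dsp1 c hbar A = covDeriv 1 (0, 1, 0) (fun q => A q / (c * hbar)) := by
  ext f p
  simp only [Dsp1, covDeriv, px1]
  push_cast
  ring

lemma Dsp2_eq_covDeriv (c hbar : ℝ) (A : Spt → ℝ) :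
    Dsp2 c hbar A = covDeriv 1 (0, 0, 1) (fun q => A q / (c * hbar)) := by
  ext f p
  simp only [Dsp2, covDeriv, px2]
  push_cast
  ring

section Smoothness

variable {c hbar : ℝ} {A : Spt → ℝ} {f : Spt → ℂ}

lemma contDiff_covDeriv {a : ℝ} {v : Spt} {α : Spt → ℝ} (hα : ContDiff ℝ 1 α)
    (hf : ContDiff ℝ 2 f) : ContDiff ℝ 1 (covDeriv a v α f) :=
  (contDiff_const.mul ((hf.fderiv_right le_rfl).clm_apply contDiff_const)).sub
    ((contDiff_const.mul (ofRealCLM.contDiff.comp hα)).mul (hf.of_le one_le_two))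

lemma contDiff_D0 (hA : ContDiff ℝ 1 A) (hf : ContDiff ℝ 2 f) : ContDiff ℝ 1 (D0 c hbar A f) := by
  rw [D0_eq_covDeriv]
  exact contDiff_covDeriv (hA.div_const _) hf

lemma contDiff_Dsp1 (hA : ContDiff ℝ 1 A) (hf : ContDiff ℝ 2 f) :
    ContDiff ℝ 1 (Dsp1 c hbar A f) := by
  rw [Dsp1_eq_covDeriv]
  exact contDiff_covDeriv (hA.div_const _) hf

lemma contDiff_Dsp2 (hA : ContDiff ℝ 1 A) (hf : ContDiff ℝ 2 f) :
    ContDiff ℝ 1 (Dsp2 c hbar A f) := by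
  rw [Dsp2_eq_covDeriv]
  exact contDiff_covDeriv (hA.div_const _) hf

end Smoothness

lemma contDiff_im_conj_mul {F : Type*} [NormedAddCommGroup F] [NormedSpace ℝ F] {f g : F → ℂ}
    (hf : ContDiff ℝ 1 f) (hg : ContDiff ℝ 1 g) : ContDiff ℝ 1 fun q => (conj (f q) * g q).im :=
  imCLM.contDiff.comp ((conjCLE.contDiff.comp hf).mul hg)

lemma fderiv_im_conj_mul_apply {E : Type*} [NormedAddCommGroup E] [NormedSpace ℝ E]
    {f g : E → ℂ} {p : E} (hf : DifferentiableAt ℝ f p) (hg : DifferentiableAt ℝ g p) (v : E) :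
    fderiv ℝ (fun q => (conj (f q) * g q).im) p v
      = (conj (fderiv ℝ f p v) * g p + conj (f p) * fderiv ℝ g p v).im := by
  have hfg : HasFDerivAt (fun q => conj (f q) * g q) _ p := hf.hasFDerivAt.star.mul hg.hasFDerivAt
  have him : HasFDerivAt (fun q => (conj (f q) * g q).im) _ p := imCLM.hasFDerivAt.comp p hfg
  rw [him.fderiv]
  simp only [RCLike.star_def, ContinuousLinearMap.comp_add, add_apply,
    ContinuousLinearMap.comp_apply, smul_apply, smul_eq_mul, imCLM_apply, mul_im, conj_re,
    conj_im, neg_mul, ContinuousLinearEquiv.coe_coe, starL'_apply, mul_neg, add_im]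
  ring

/-- The gauge terms `-I α z` cancel because `α` is real. -/
lemma im_conj_mul_covariant (a α : ℝ) (z z' w' : ℂ) :
    a * (conj z' * (a * z' - I * α * z) + conj z * w').im
      = (conj z * (a * w' - I * α * (a * z' - I * α * z))).im := by
  simp only [mul_im, mul_re, sub_im, sub_re, add_im, conj_re, conj_im, ofReal_re, ofReal_im,
    I_re, I_im]
  ring

lemma mul_fderiv_im_conj_mul_covDeriv {a : ℝ} {v : Spt} {α : Spt → ℝ} {f : Spt → ℂ} {p : Spt}
    (hf : DifferentiableAt ℝ f p) (hDf : DifferentiableAt ℝ (covDeriv a v α f) p) :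
    a * fderiv ℝ (fun q => (conj (f q) * covDeriv a v α f q).im) p v
      = (conj (f p) * covDeriv a v α (covDeriv a v α f) p).im := by
  rw [fderiv_im_conj_mul_apply hf hDf]
  exact im_conj_mul_covariant a (α p) (f p) (fderiv ℝ f p v) _

section Currents

variable {c hbar : ℝ} {A A₀ A₁ A₂ : Spt → ℝ} {φ : Spt → ℂ}

lemma ptd_im_conj_mul_D0 (hA : ContDiff ℝ 1 A) (hφ : ContDiff ℝ 2 φ) (p : Spt) :
    1 / c * ptd (fun q => (conj (φ q) * D0 c hbar A φ q).im) p
      = (conj (φ p) * D0 c hbar A (D0 c hbar A φ) p).im := by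
  rw [D0_eq_covDeriv]
  exact mul_fderiv_im_conj_mul_covDeriv (hφ.differentiable two_ne_zero p)
    ((contDiff_covDeriv (hA.div_const _) hφ).differentiable one_ne_zero p)

lemma px1_im_conj_mul_Dsp1 (hA : ContDiff ℝ 1 A) (hφ : ContDiff ℝ 2 φ) (p : Spt) :
    px1 (fun q => (conj (φ q) * Dsp1 c hbar A φ q).im) p
      = (conj (φ p) * Dsp1 c hbar A (Dsp1 c hbar A φ) p).im := by
  rw [Dsp1_eq_covDeriv, ← one_mul (px1 _ p)]
  exact mul_fderiv_im_conj_mul_covDeriv (hφ.differentiable two_ne_zero p)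
    ((contDiff_covDeriv (hA.div_const _) hφ).differentiable one_ne_zero p)

lemma px2_im_conj_mul_Dsp2 (hA : ContDiff ℝ 1 A) (hφ : ContDiff ℝ 2 φ) (p : Spt) :
    px2 (fun q => (conj (φ q) * Dsp2 c hbar A φ q).im) p
      = (conj (φ p) * Dsp2 c hbar A (Dsp2 c hbar A φ) p).im := by
  rw [Dsp2_eq_covDeriv, ← one_mul (px2 _ p)]
  exact mul_fderiv_im_conj_mul_covDeriv (hφ.differentiable two_ne_zero p)
    ((contDiff_covDeriv (hA.div_const _) hφ).differentiable one_ne_zero p)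

lemma continuity_equation (hc : c ≠ 0) (hA₀ : ContDiff ℝ 1 A₀) (hA₁ : ContDiff ℝ 1 A₁)
    (hA₂ : ContDiff ℝ 1 A₂) (hφ : ContDiff ℝ 2 φ)
    (hfield : ∀ p, (conj (φ p) * (D0 c hbar A₀ (D0 c hbar A₀ φ) p
      - Dsp1 c hbar A₁ (Dsp1 c hbar A₁ φ) p - Dsp2 c hbar A₂ (Dsp2 c hbar A₂ φ) p)).im = 0)
    (p : Spt) :
    ptd (fun q => (conj (φ q) * D0 c hbar A₀ φ q).im) p
      = c * (px1 (fun q => (conj (φ q) * Dsp1 c hbar A₁ φ q).im) p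
        + px2 (fun q => (conj (φ q) * Dsp2 c hbar A₂ φ q).im) p) := by
  have h₀ := ptd_im_conj_mul_D0 (c := c) (hbar := hbar) hA₀ hφ p
  have h₁ := px1_im_conj_mul_Dsp1 (c := c) (hbar := hbar) hA₁ hφ p
  have h₂ := px2_im_conj_mul_Dsp2 (c := c) (hbar := hbar) hA₂ hφ p
  have h := hfield p
  rw [mul_sub, mul_sub, sub_im, sub_im] at h
  field_simp at h₀
  linear_combination h₀ - c * h₁ - c * h₂ + c * h

end Currents

lemma im_conj_mul_eq_zero_of_add_eq_zero {k r : ℝ} {z w : ℂ} (hk : k ≠ 0)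
    (h : (k : ℂ) * z + r * w = 0) : (conj w * z).im = 0 := by
  have hk' : (k : ℂ) ≠ 0 := ofReal_ne_zero.mpr hk
  have hz : z = ((-r / k : ℝ) : ℂ) * w := by
    push_cast
    field_simp
    linear_combination h
  rw [hz, mul_left_comm, ← normSq_eq_conj_mul_self]
  norm_cast

lemma intervalIntegrable_slice {E H : Type*} [NormedAddCommGroup E] [TopologicalSpace H]
    {f : ℝ × H → E} (hf : Continuous f) (z : H) {a b : ℝ} :
    IntervalIntegrable (fun s => f (s, z)) MeasureTheory.volume a b :=
  (hf.comp (continuous_id.prodMk continuous_const)).intervalIntegrable _ _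

section Slices

variable {E H : Type*} [NormedAddCommGroup E] [NormedSpace ℝ E] [NormedAddCommGroup H]
  [NormedSpace ℝ H]

lemma hasFDerivAt_slice {f : ℝ × H → E} {t : ℝ} {z : H} (hf : DifferentiableAt ℝ f (t, z)) :
    HasFDerivAt (fun w => f (t, w)) ((fderiv ℝ f (t, z)).comp (.inr ℝ ℝ H)) z :=
  hf.hasFDerivAt.comp z ((hasFDerivAt_const t z).prodMk (hasFDerivAt_id z))

lemma hasDerivAt_time_slice {f : ℝ × H → E} {t : ℝ} {z : H} (hf : DifferentiableAt ℝ f (t, z)) :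
    HasDerivAt (fun s => f (s, z)) (fderiv ℝ f (t, z) (1, 0)) t :=
  hf.hasFDerivAt.comp_hasDerivAt t ((hasDerivAt_id t).prodMk (hasDerivAt_const t z))

lemma continuous_fderiv_apply {f : H → E} (hf : ContDiff ℝ 1 f) (v : H) :
    Continuous fun q => fderiv ℝ f q v :=
  (hf.continuous_fderiv one_ne_zero).clm_apply continuous_const

lemma integral_ptd [CompleteSpace E] {f : Spt → E} (hf : ContDiff ℝ 1 f) (a b : ℝ) (z : ℝ × ℝ) :
    ∫ s in a..b, ptd f (s, z) = f (b, z) - f (a, z) :=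
  intervalIntegral.integral_eq_sub_of_hasDerivAt
    (fun _ _ => hasDerivAt_time_slice (hf.differentiable one_ne_zero _))
    (intervalIntegrable_slice (continuous_fderiv_apply hf _) z)

lemma ptd_eq_zero_of_forall_eq {f : Spt → E} (hf : ∀ t z, f (t, z) = f (0, z)) (p : Spt) :
    ptd f p = 0 := by
  obtain ⟨t, z⟩ := p
  by_cases hd : DifferentiableAt ℝ f (t, z)
  · have hderiv := hasDerivAt_time_slice hd
    rw [show (fun s => f (s, z)) = fun _ => f (0, z) from funext fun s => hf s z] at hderiv
    exact hderiv.unique (hasDerivAt_const t _)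
  · exact congrArg (· (1, 0, 0)) (fderiv_zero_of_not_differentiableAt hd)

variable [ProperSpace H]

lemma hasFDerivAt_integral_slice {f : ℝ × H → E} (hf : ContDiff ℝ 1 f) (a b : ℝ) (z : H) :
    HasFDerivAt (fun w => ∫ s in a..b, f (s, w))
      (∫ s in a..b, (fderiv ℝ f (s, z)).comp (.inr ℝ ℝ H)) z := by
  set F' : ℝ × H → H →L[ℝ] E := fun q => (fderiv ℝ f q).comp (.inr ℝ ℝ H)
  have hF' : Continuous F' := (hf.continuous_fderiv one_ne_zero).clm_comp continuous_const
  obtain ⟨M, hM⟩ := (isCompact_uIcc.prod (isCompact_closedBall z 1)).exists_bound_of_continuousOn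
    hF'.continuousOn
  refine intervalIntegral.hasFDerivAt_integral_of_dominated_of_fderiv_le
    (F' := fun w s => F' (s, w)) (bound := fun _ => M) (Metric.ball_mem_nhds z one_pos) ?_ ?_ ?_ ?_
    intervalIntegrable_const ?_
  · exact .of_forall fun w =>
      (hf.continuous.comp (continuous_id.prodMk continuous_const)).aestronglyMeasurable
  · exact intervalIntegrable_slice hf.continuous z
  · exact (hF'.comp (continuous_id.prodMk continuous_const)).aestronglyMeasurable
  · exact .of_forall fun s hs w hw =>
      hM (s, w) ⟨Set.uIoc_subset_uIcc hs, Metric.ball_subset_closedBall hw⟩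
  · exact .of_forall fun s _ w _ => hasFDerivAt_slice (hf.differentiable one_ne_zero _)

lemma fderiv_integral_slice_apply {f : ℝ × H → E} (hf : ContDiff ℝ 1 f) (a b : ℝ) (z v : H) :
    fderiv ℝ (fun w => ∫ s in a..b, f (s, w)) z v = ∫ s in a..b, fderiv ℝ f (s, z) (0, v) := by
  rw [(hasFDerivAt_integral_slice hf a b z).fderiv, ContinuousLinearMap.intervalIntegral_apply]
  · rfl
  · exact ((hf.continuous_fderiv one_ne_zero).clm_comp continuous_const).comp
      (continuous_id.prodMk continuous_const) |>.intervalIntegrable _ _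

end Slices

lemma mixed_partials_comm {P : ℝ × ℝ → ℝ} (hP : Differentiable ℝ P) {z : ℝ × ℝ}
    (h₁ : DifferentiableAt ℝ (fun y => fderiv ℝ P y (1, 0)) z)
    (h₂ : DifferentiableAt ℝ (fun y => fderiv ℝ P y (0, 1)) z) :
    fderiv ℝ (fun y => fderiv ℝ P y (0, 1)) z (1, 0)
      = fderiv ℝ (fun y => fderiv ℝ P y (1, 0)) z (0, 1) := by
  have hdecomp : fderiv ℝ P = fun y => fderiv ℝ P y (1, 0) • ContinuousLinearMap.fst ℝ ℝ ℝ
      + fderiv ℝ P y (0, 1) • ContinuousLinearMap.snd ℝ ℝ ℝ := by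
    ext y <;> simp
  have hdiff : DifferentiableAt ℝ (fderiv ℝ P) z := by
    rw [hdecomp]
    exact (h₁.smul_const _).add (h₂.smul_const _)
  have hsymm := second_derivative_symmetric_of_eventually (f := P)
    (.of_forall fun y => (hP y).hasFDerivAt) hdiff.hasFDerivAt (1, 0) (0, 1)
  simpa [fderiv_clm_apply hdiff (differentiableAt_const _)] using hsymm

section Curl

variable {A B : Spt → ℝ}

lemma hasFDerivAt_increment (hA : ContDiff ℝ 1 A) (hB : ContDiff ℝ 1 B) (t : ℝ) (z : ℝ × ℝ) :
    HasFDerivAt (fun w => A (t, w) - A (0, w) - ∫ s in 0..t, B (s, w))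
      ((fderiv ℝ A (t, z)).comp (.inr ℝ ℝ (ℝ × ℝ)) - (fderiv ℝ A (0, z)).comp (.inr ℝ ℝ (ℝ × ℝ))
        - fderiv ℝ (fun w => ∫ s in 0..t, B (s, w)) z) z :=
  ((hasFDerivAt_slice (hA.differentiable one_ne_zero _)).sub
    (hasFDerivAt_slice (hA.differentiable one_ne_zero _))).sub
    (hasFDerivAt_integral_slice hB 0 t z).differentiableAt.hasFDerivAt

lemma fderiv_increment_apply (hA : ContDiff ℝ 1 A) (hB : ContDiff ℝ 1 B) (t : ℝ)
    (z v : ℝ × ℝ) :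
    fderiv ℝ (fun w => A (t, w) - A (0, w) - ∫ s in 0..t, B (s, w)) z v
      = fderiv ℝ A (t, z) (0, v) - fderiv ℝ A (0, z) (0, v)
        - ∫ s in 0..t, fderiv ℝ B (s, z) (0, v) := by
  rw [(hasFDerivAt_increment hA hB t z).fderiv]
  simp only [sub_apply, ContinuousLinearMap.comp_apply, ContinuousLinearMap.inr_apply,
    fderiv_integral_slice_apply hB]

lemma integral_ptd_sub (hA : ContDiff ℝ 1 A) (hB : Continuous B) (t : ℝ) (w : ℝ × ℝ) :
    ∫ s in 0..t, (ptd A (s, w) - B (s, w)) = A (t, w) - A (0, w) - ∫ s in 0..t, B (s, w) := by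
  rw [intervalIntegral.integral_sub, integral_ptd hA]
  · exact intervalIntegrable_slice (continuous_fderiv_apply hA _) w
  · exact intervalIntegrable_slice hB w

lemma curl_sub_curl_eq_integral {χ A₁ A₂ B₁ B₂ : Spt → ℝ} (hχ : ContDiff ℝ 1 χ)
    (hA₁ : ContDiff ℝ 1 A₁) (hA₂ : ContDiff ℝ 1 A₂) (hB₁ : ContDiff ℝ 1 B₁)
    (hB₂ : ContDiff ℝ 1 B₂) (h₁ : ∀ q, ptd A₁ q = px1 χ q + B₁ q)
    (h₂ : ∀ q, ptd A₂ q = px2 χ q + B₂ q) (t : ℝ) (z : ℝ × ℝ) :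
    (px1 A₂ (t, z) - px2 A₁ (t, z)) - (px1 A₂ (0, z) - px2 A₁ (0, z))
      = ∫ s in 0..t, (px1 B₂ (s, z) - px2 B₁ (s, z)) := by
  set P : ℝ × ℝ → ℝ := fun w => ∫ s in 0..t, χ (s, w)
  have hPΦ : (fun w => fderiv ℝ P w (1, 0))
      = fun w => A₁ (t, w) - A₁ (0, w) - ∫ s in 0..t, B₁ (s, w) := by
    ext w
    rw [fderiv_integral_slice_apply hχ, ← integral_ptd_sub hA₁ hB₁.continuous]
    exact intervalIntegral.integral_congr fun s _ => eq_sub_of_add_eq (h₁ _).symm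
  have hPΨ : (fun w => fderiv ℝ P w (0, 1))
      = fun w => A₂ (t, w) - A₂ (0, w) - ∫ s in 0..t, B₂ (s, w) := by
    ext w
    rw [fderiv_integral_slice_apply hχ, ← integral_ptd_sub hA₂ hB₂.continuous]
    exact intervalIntegral.integral_congr fun s _ => eq_sub_of_add_eq (h₂ _).symm
  have hsymm := mixed_partials_comm
    (fun w => (hasFDerivAt_integral_slice hχ 0 t w).differentiableAt)
    (hPΦ ▸ (hasFDerivAt_increment hA₁ hB₁ t z).differentiableAt)
    (hPΨ ▸ (hasFDerivAt_increment hA₂ hB₂ t z).differentiableAt)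
  rw [hPΦ, hPΨ, fderiv_increment_apply hA₁ hB₁, fderiv_increment_apply hA₂ hB₂] at hsymm
  unfold px1 px2
  rw [intervalIntegral.integral_sub (intervalIntegrable_slice (continuous_fderiv_apply hB₂ _) z)
    (intervalIntegrable_slice (continuous_fderiv_apply hB₁ _) z)]
  linarith

end Curl

lemma fderiv_const_mul_apply {F : Type*} [NormedAddCommGroup F] [NormedSpace ℝ F] {f : F → ℝ}
    (hf : Differentiable ℝ f) (k : ℝ) (q v : F) :
    fderiv ℝ (fun q => k * f q) q v = k * fderiv ℝ f q v := by
  rw [fderiv_const_mul (hf q)]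
  rfl

lemma gauss_law_defect_eq_initial {c hbar κ : ℝ} {A₀ A₁ A₂ : Spt → ℝ} {φ : Spt → ℂ}
    (hc : c ≠ 0) (hκ : κ ≠ 0) (hA₀ : ContDiff ℝ 1 A₀) (hA₁ : ContDiff ℝ 1 A₁)
    (hA₂ : ContDiff ℝ 1 A₂) (hφ : ContDiff ℝ 2 φ)
    (hfield : ∀ p, (conj (φ p) * (D0 c hbar A₀ (D0 c hbar A₀ φ) p
      - Dsp1 c hbar A₁ (Dsp1 c hbar A₁ φ) p - Dsp2 c hbar A₂ (Dsp2 c hbar A₂ φ) p)).im = 0)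
    (hg1 : ∀ p, κ * ((1 / c) * ptd A₁ p - px1 A₀ p)
      = -(2 * hbar * (conj (φ p) * Dsp2 c hbar A₂ φ p).im))
    (hg2 : ∀ p, κ * ((1 / c) * ptd A₂ p - px2 A₀ p)
      = 2 * hbar * (conj (φ p) * Dsp1 c hbar A₁ φ p).im)
    (t : ℝ) (z : ℝ × ℝ) :
    κ / c * (px1 A₂ (t, z) - px2 A₁ (t, z))
        - 2 * hbar / c * (conj (φ (t, z)) * D0 c hbar A₀ φ (t, z)).im
      = κ / c * (px1 A₂ (0, z) - px2 A₁ (0, z))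
        - 2 * hbar / c * (conj (φ (0, z)) * D0 c hbar A₀ φ (0, z)).im := by
  set ρ₀ : Spt → ℝ := fun q => (conj (φ q) * D0 c hbar A₀ φ q).im
  set ρ₁ : Spt → ℝ := fun q => (conj (φ q) * Dsp1 c hbar A₁ φ q).im
  set ρ₂ : Spt → ℝ := fun q => (conj (φ q) * Dsp2 c hbar A₂ φ q).im
  have hφ₁ : ContDiff ℝ 1 φ := hφ.of_le one_le_two
  have hρ₀ : ContDiff ℝ 1 ρ₀ := contDiff_im_conj_mul hφ₁ (contDiff_D0 hA₀ hφ)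
  have hρ₁ : ContDiff ℝ 1 ρ₁ := contDiff_im_conj_mul hφ₁ (contDiff_Dsp1 hA₁ hφ)
  have hρ₂ : ContDiff ℝ 1 ρ₂ := contDiff_im_conj_mul hφ₁ (contDiff_Dsp2 hA₂ hφ)
  have hA₀' := hA₀.differentiable one_ne_zero
  have h₁ (q : Spt) :
      ptd A₁ q = px1 (fun q => c * A₀ q) q + (fun q => -(2 * hbar * c / κ) * ρ₂ q) q := by
    have := hg1 q
    unfold px1 at this ⊢
    rw [fderiv_const_mul_apply hA₀']
    field_simp at this ⊢
    linear_combination this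
  have h₂ (q : Spt) :
      ptd A₂ q = px2 (fun q => c * A₀ q) q + (fun q => 2 * hbar * c / κ * ρ₁ q) q := by
    have := hg2 q
    unfold px2 at this ⊢
    rw [fderiv_const_mul_apply hA₀']
    field_simp at this ⊢
    linear_combination this
  have hcurl := curl_sub_curl_eq_integral (contDiff_const.mul hA₀) hA₁ hA₂
    (contDiff_const.mul hρ₂) (contDiff_const.mul hρ₁) h₁ h₂ t z
  have hB (s : ℝ) : px1 (fun q => 2 * hbar * c / κ * ρ₁ q) (s, z)
      - px2 (fun q => -(2 * hbar * c / κ) * ρ₂ q) (s, z) = 2 * hbar / κ * ptd ρ₀ (s, z) := by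
    rw [continuity_equation hc hA₀ hA₁ hA₂ hφ hfield]
    unfold px1 px2
    rw [fderiv_const_mul_apply (hρ₁.differentiable one_ne_zero),
      fderiv_const_mul_apply (hρ₂.differentiable one_ne_zero)]
    field_simp
    ring
  simp only [hB, intervalIntegral.integral_const_mul, integral_ptd hρ₀] at hcurl
  field_simp at hcurl
  change _ - 2 * hbar / c * ρ₀ (t, z) = _ - 2 * hbar / c * ρ₀ (0, z)
  linear_combination hcurl / c

end GaussLaw

theorem gauss_law_propagation_general (c hbar κ m : ℝ)
    (hc : 0 < c) (hhbar : 0 < hbar) (hκ : 0 < κ)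
    (W : ℝ → ℝ) (φ : Spt → ℂ) (A₀ A₁ A₂ : Spt → ℝ)
    (hφ : ContDiff ℝ 2 φ) (hA₀ : ContDiff ℝ 1 A₀)
    (hA₁ : ContDiff ℝ 1 A₁) (hA₂ : ContDiff ℝ 1 A₂)
    (heq : ∀ p : Spt,
      ((hbar ^ 2 : ℝ) : ℂ) *
          (D0 c hbar A₀ (D0 c hbar A₀ φ) p
            - Dsp1 c hbar A₁ (Dsp1 c hbar A₁ φ) p
            - Dsp2 c hbar A₂ (Dsp2 c hbar A₂ φ) p)
        + ((m ^ 2 * c ^ 2 : ℝ) : ℂ) * φ p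
        + ((2 * m : ℝ) : ℂ) * ((W (2 * m * Complex.normSq (φ p)) : ℝ) : ℂ) * φ p = 0)
    (hg1 : ∀ p : Spt,
      κ * ((1 / c) * ptd A₁ p - px1 A₀ p)
        = -(2 * hbar * ((starRingEnd ℂ) (φ p) * Dsp2 c hbar A₂ φ p).im))
    (hg2 : ∀ p : Spt,
      κ * ((1 / c) * ptd A₂ p - px2 A₀ p)
        = 2 * hbar * ((starRingEnd ℂ) (φ p) * Dsp1 c hbar A₁ φ p).im) :
    (∀ p : Spt,
      ptd (fun q => κ / c * (px1 A₂ q - px2 A₁ q)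
            - 2 * hbar / c * ((starRingEnd ℂ) (φ q) * D0 c hbar A₀ φ q).im) p = 0)
    ∧
    ((∀ x₁ x₂ : ℝ,
        κ / c * (px1 A₂ (0, x₁, x₂) - px2 A₁ (0, x₁, x₂))
          = 2 * hbar / c *
              ((starRingEnd ℂ) (φ (0, x₁, x₂)) * D0 c hbar A₀ φ (0, x₁, x₂)).im) →
      ∀ p : Spt,
        κ / c * (px1 A₂ p - px2 A₁ p)
          = 2 * hbar / c * ((starRingEnd ℂ) (φ p) * D0 c hbar A₀ φ p).im) := by
  have hconst := GaussLaw.gauss_law_defect_eq_initial hc.ne' hκ.ne' hA₀ hA₁ hA₂ hφ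
    (fun p => GaussLaw.im_conj_mul_eq_zero_of_add_eq_zero (pow_ne_zero 2 hhbar.ne')
      (r := m ^ 2 * c ^ 2 + 2 * m * W (2 * m * Complex.normSq (φ p)))
      (by push_cast at heq ⊢; linear_combination heq p))
    hg1 hg2
  refine ⟨GaussLaw.ptd_eq_zero_of_forall_eq hconst, fun h₀ ⟨t, x₁, x₂⟩ => ?_⟩
  linarith [hconst t (x₁, x₂), h₀ x₁ x₂]

/-- Propagation of the Chern–Simons Gauss-law constraint:
the scalar field equation together with the two gauge evolution equations imply
`∂_t((κ/c)(∂₁A₂ − ∂₂A₁) − (2hbar/c) Im(conj(φ) D₀φ)) = 0` everywhere; in particular,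
if the Gauss-law constraint holds at time `t = 0`, it holds for all times. -/
theorem gauss_law_propagation (c hbar κ m : ℝ)
    (hc : 0 < c) (hhbar : 0 < hbar) (hκ : 0 < κ) (hm : 0 < m)
    (W : ℝ → ℝ) (φ : Spt → ℂ) (A₀ A₁ A₂ : Spt → ℝ)
    (hφ : ContDiff ℝ 2 φ) (hA₀ : ContDiff ℝ 1 A₀)
    (hA₁ : ContDiff ℝ 1 A₁) (hA₂ : ContDiff ℝ 1 A₂)
    (heq : ∀ p : Spt,
      ((hbar ^ 2 : ℝ) : ℂ) *
          (D0 c hbar A₀ (D0 c hbar A₀ φ) p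
            - Dsp1 c hbar A₁ (Dsp1 c hbar A₁ φ) p
            - Dsp2 c hbar A₂ (Dsp2 c hbar A₂ φ) p)
        + ((m ^ 2 * c ^ 2 : ℝ) : ℂ) * φ p
        + ((2 * m : ℝ) : ℂ) * ((W (2 * m * Complex.normSq (φ p)) : ℝ) : ℂ) * φ p = 0)
    (hg1 : ∀ p : Spt,
      κ * ((1 / c) * ptd A₁ p - px1 A₀ p)
        = -(2 * hbar * ((starRingEnd ℂ) (φ p) * Dsp2 c hbar A₂ φ p).im))
    (hg2 : ∀ p : Spt,
      κ * ((1 / c) * ptd A₂ p - px2 A₀ p)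
        = 2 * hbar * ((starRingEnd ℂ) (φ p) * Dsp1 c hbar A₁ φ p).im) :
    (∀ p : Spt,
      ptd (fun q => κ / c * (px1 A₂ q - px2 A₁ q)
            - 2 * hbar / c * ((starRingEnd ℂ) (φ q) * D0 c hbar A₀ φ q).im) p = 0)
    ∧
    ((∀ x₁ x₂ : ℝ,
        κ / c * (px1 A₂ (0, x₁, x₂) - px2 A₁ (0, x₁, x₂))
          = 2 * hbar / c *
              ((starRingEnd ℂ) (φ (0, x₁, x₂)) * D0 c hbar A₀ φ (0, x₁, x₂)).im) →
      ∀ p : Spt,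
        κ / c * (px1 A₂ p - px2 A₁ p)
          = 2 * hbar / c * ((starRingEnd ℂ) (φ p) * D0 c hbar A₀ φ p).im) :=
  gauss_law_propagation_general c hbar κ m hc hhbar hκ W φ A₀ A₁ A₂ hφ hA₀ hA₁ hA₂ heq hg1 hg2
end
end
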